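/- arXiv:2604.09093 — 2 statements merged into one kernel-verified Lean document; each statement's English description precedes it below -/
import Mathlib

section
/- Let (X,μ) be an ergodic stationary (G,θ)-space (as a G-space). Then the forward skew-product transformation τ(ω,x) = (σω, ω_0.x) on (G^ℕ × X, θ^{⊗ℕ} ⊗ μ) is ergodic, and conversely. -/
open MeasureTheory ENNReal

/-- `u` is `θ`-harmonic: `u ∗ θ = u`, i.e. `∫ u(g h) dθ(h) = u(g)` for all `g`. -/
def IsHarmonic {G : Type*} [Group G] [MeasurableSpace G] (θ : Measure G) (u : G → ℝ) : Prop :=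
  ∀ g : G, ∫ h, u (g * h) ∂θ = u g

/-- The normalized cone `ℍ(G,θ)` of positive measurable `θ`-harmonic functions `u` with
`u(e) = 1`. -/
def harmCone {G : Type*} [Group G] [MeasurableSpace G] (θ : Measure G) : Set (G → ℝ) :=
  {u | Measurable u ∧ (∀ g, 0 < u g) ∧ IsHarmonic θ u ∧ u 1 = 1}

/-- The harmonic majorant `𝔪_θ(g) = sup{u(g) : u ∈ ℍ(G,θ)}`, with values in `[1,∞]`. -/
noncomputable def majorant {G : Type*} [Group G] [MeasurableSpace G] (θ : Measure G)
    (g : G) : ℝ≥0∞ :=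
  ⨆ u ∈ harmCone θ, ENNReal.ofReal (u g)

/-- `θ` is admissible with respect to the Haar measure `mG`: it is absolutely continuous
with respect to the Haar measure class, and it is not supported on a proper closed
subsemigroup of `G`. -/
def IsAdmissible {G : Type*} [Group G] [TopologicalSpace G] [MeasurableSpace G]
    (mG θ : Measure G) : Prop :=
  θ ≪ mG ∧ ∀ S : Set G, IsClosed S → (∀ a ∈ S, ∀ b ∈ S, a * b ∈ S) → θ Sᶜ = 0 →
    S = Set.univ


/-!
Stationarity of `μ` and independence of the increments make `τ` preserve `ℙ ⊗ μ`. For a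
`τ`-invariant set `s`, the slice measure `F x = ℙ {ω | (ω, x) ∈ s}` is a bounded `θ`-harmonic
function on `X`, and expanding `∫∫ (F (g • x) - F x)² dθ dμ` with stationarity shows that
`F (g • x) = F x` for `θ ⊗ μ`-a.e. `(g, x)`. The `g` for which this holds `μ`-a.e. form a
measurable subgroup of full `θ`-measure; by Steinhaus it is open, hence closed, so admissibility
makes it all of `G`. Ergodicity of the action then makes `F` a.e. equal to a constant `c`. Since
`1_s = 1_s ∘ τⁿ` and the tail `σⁿ ω` is independent of the first `n` letters, `ℙ ⊗ μ` restricted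
to `s` agrees with `c • (ℙ ⊗ μ)` on cylinders `C × A`, hence everywhere, which forces
`c ∈ {0, 1}`. Conversely, a `G`-invariant set `A` lifts to the `τ`-invariant set `Ω × A`.
-/

open Set

theorem MeasureTheory.MeasurePreserving.integral_comp_of_aestronglyMeasurable {α β E : Type*}
    [MeasurableSpace α] [MeasurableSpace β] [NormedAddCommGroup E] [NormedSpace ℝ E]
    {μa : Measure α} {μb : Measure β} {φ : α → β} (hφ : MeasurePreserving φ μa μb) {g : β → E}
    (hg : AEStronglyMeasurable g μb) :
    ∫ x, g (φ x) ∂μa = ∫ y, g y ∂μb := by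
  rw [← integral_map hφ.measurable.aemeasurable (by rwa [hφ.map_eq]), hφ.map_eq]

theorem eventuallyConst_ae_of_restrict_eq_smul {Ω : Type*} [MeasurableSpace Ω] {ρ : Measure Ω}
    [IsProbabilityMeasure ρ] {s : Set Ω} (hs : MeasurableSet s) {c : ℝ≥0∞}
    (h : ρ.restrict s = c • ρ) :
    Filter.EventuallyConst s (ae ρ) := by
  have huniv : ρ s = c := by simpa using congr($h univ)
  have hcompl : c * ρ sᶜ = 0 := by
    simpa [Measure.restrict_apply hs.compl] using congr($h sᶜ).symm
  rw [Filter.eventuallyConst_set', ae_eq_empty, ae_eq_univ]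
  rcases mul_eq_zero.1 hcompl with hc | hc
  · exact .inl (huniv.trans hc)
  · exact .inr hc

section PrefixCylinder

variable {α : Type*}

def prefixCylinder (n : ℕ) (a : ℕ → Set α) : Set (ℕ → α) :=
  {ω | ∀ i < n, ω i ∈ a i}

lemma prefixCylinder_eq_pi (n : ℕ) (a : ℕ → Set α) :
    prefixCylinder n a = (Finset.range n : Set ℕ).pi a := by
  ext; simp [prefixCylinder]

variable [MeasurableSpace α]

lemma measurableSet_prefixCylinder (n : ℕ) {a : ℕ → Set α} (ha : ∀ i, MeasurableSet (a i)) :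
    MeasurableSet (prefixCylinder n a) := by
  rw [prefixCylinder_eq_pi]
  exact .pi (Finset.countable_toSet _) fun i _ => ha i

lemma exists_prefixCylinder_eq_of_mem_squareCylinders {S : Set (ℕ → α)}
    (hS : S ∈ squareCylinders fun _ => {s : Set α | MeasurableSet s}) :
    ∃ n a, (∀ i, MeasurableSet (a i)) ∧ S = prefixCylinder n a := by
  classical
  obtain ⟨s, t, ht, rfl⟩ := hS
  obtain ⟨n, hn⟩ := s.exists_nat_subset_range
  refine ⟨n, s.piecewise t fun _ => univ, fun i => ?_, ?_⟩
  · by_cases hi : i ∈ s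
    · simpa [hi] using ht i (mem_univ i)
    · simp [hi]
  · ext ω
    simp only [mem_pi, Finset.mem_coe, prefixCylinder, mem_ofPred_eq]
    refine ⟨fun h i _ => ?_, fun h i hi => ?_⟩
    · by_cases hi : i ∈ s
      · simpa [hi] using h i hi
      · simp [hi]
    · simpa [hi] using h i (Finset.mem_range.mp (hn hi))

theorem MeasureTheory.Measure.ext_of_prefixCylinder {ν₁ ν₂ : Measure (ℕ → α)} [IsFiniteMeasure ν₁]
    (h : ∀ n a, (∀ i, MeasurableSet (a i)) → ν₁ (prefixCylinder n a) = ν₂ (prefixCylinder n a)) :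
    ν₁ = ν₂ := by
  refine ext_of_generate_finite _ generateFrom_squareCylinders.symm
    (isPiSystem_squareCylinders (fun _ => MeasurableSpace.isPiSystem_measurableSet) fun _ => .univ)
    (fun S hS => ?_) ?_
  · obtain ⟨n, a, ha, rfl⟩ := exists_prefixCylinder_eq_of_mem_squareCylinders hS
    exact h n a ha
  · simpa [prefixCylinder] using h 0 (fun _ => univ) fun _ => .univ

theorem MeasureTheory.Measure.ext_prod_prefixCylinder {β : Type*} [MeasurableSpace β]
    {ρ₁ ρ₂ : Measure ((ℕ → α) × β)} [IsFiniteMeasure ρ₁]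
    (h : ∀ n a, (∀ i, MeasurableSet (a i)) → ∀ v, MeasurableSet v →
      ρ₁ (prefixCylinder n a ×ˢ v) = ρ₂ (prefixCylinder n a ×ˢ v)) :
    ρ₁ = ρ₂ := by
  refine Measure.ext_prod fun {t v} ht hv => ?_
  have hslice : ∀ ρ : Measure ((ℕ → α) × β), ∀ t, MeasurableSet t →
      (ρ.restrict (univ ×ˢ v)).map Prod.fst t = ρ (t ×ˢ v) := fun ρ t ht => by
    rw [Measure.map_apply measurable_fst ht, Measure.restrict_apply (measurable_fst ht),
      ← prod_univ, prod_inter_prod, inter_univ, univ_inter]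
  have hmarg : (ρ₁.restrict (univ ×ˢ v)).map Prod.fst = (ρ₂.restrict (univ ×ˢ v)).map Prod.fst :=
    Measure.ext_of_prefixCylinder fun n a ha => by
      rw [hslice ρ₁ _ (measurableSet_prefixCylinder n ha),
        hslice ρ₂ _ (measurableSet_prefixCylinder n ha), h n a ha v hv]
  rw [← hslice ρ₁ t ht, ← hslice ρ₂ t ht, hmarg]

end PrefixCylinder

section Bernoulli

variable {G : Type*}

def tailHead (ω : ℕ → G) : (ℕ → G) × G := (fun n => ω (n + 1), ω 0)

lemma tailHead_preimage_prefixCylinder_prod (n : ℕ) (a : ℕ → Set G) (v : Set G) :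
    tailHead ⁻¹' (prefixCylinder n a ×ˢ v) =
      prefixCylinder (n + 1) (fun | 0 => v | i + 1 => a i) := by
  ext ω
  simp only [tailHead, prefixCylinder, mem_preimage, mem_prod, mem_ofPred_eq,
    Nat.forall_lt_succ_left]
  exact and_comm

variable [MeasurableSpace G] {θ : Measure G} {P : Measure (ℕ → G)}

@[fun_prop]
lemma measurable_tailHead : Measurable (tailHead : (ℕ → G) → (ℕ → G) × G) := by
  unfold tailHead; fun_prop

theorem measurePreserving_tailHead [IsProbabilityMeasure θ] [IsProbabilityMeasure P]
    (hiid : ∀ n a, (∀ i, MeasurableSet (a i)) →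
      P (prefixCylinder n a) = ∏ i ∈ Finset.range n, θ (a i)) :
    MeasurePreserving tailHead P (P.prod θ) := by
  refine ⟨measurable_tailHead, Measure.ext_prod_prefixCylinder fun n a ha v hv => ?_⟩
  have hb : ∀ i, MeasurableSet ((fun | 0 => v | i + 1 => a i : ℕ → Set G) i) := by
    rintro (_ | i); exacts [hv, ha i]
  rw [Measure.map_apply measurable_tailHead ((measurableSet_prefixCylinder n ha).prod hv),
    tailHead_preimage_prefixCylinder_prod, hiid _ _ hb, Measure.prod_prod, hiid n a ha,
    Finset.prod_range_succ', mul_comm]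

theorem setLIntegral_prefixCylinder_succ [SFinite θ] [SFinite P]
    (hP : MeasurePreserving tailHead P (P.prod θ)) {n : ℕ} {a : ℕ → Set G}
    (ha : ∀ i, MeasurableSet (a i)) {Φ : (ℕ → G) × G → ℝ≥0∞} (hΦ : Measurable Φ) :
    ∫⁻ ω in prefixCylinder (n + 1) a, Φ (tailHead ω) ∂P =
      ∫⁻ g in a 0, ∫⁻ ω in prefixCylinder n (fun i => a (i + 1)), Φ (ω, g) ∂P ∂θ := by
  have hcyl : prefixCylinder (n + 1) a =
      tailHead ⁻¹' (prefixCylinder n (fun i => a (i + 1)) ×ˢ a 0) := by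
    rw [tailHead_preimage_prefixCylinder_prod]
    congr; funext i; cases i <;> rfl
  rw [hcyl, hP.setLIntegral_comp_preimage ((measurableSet_prefixCylinder n fun i => ha _).prod
    (ha 0)) hΦ, ← Measure.prod_restrict, lintegral_prod_symm _ hΦ.aemeasurable]

end Bernoulli

section SkewProduct

variable {G X : Type*} [SMul G X]

def skewProduct (p : (ℕ → G) × X) : (ℕ → G) × X := (fun n => p.1 (n + 1), p.1 0 • p.2)

variable [MeasurableSpace G] [MeasurableSpace X] {θ : Measure G} {μ : Measure X}
  {P : Measure (ℕ → G)}

@[fun_prop]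
lemma measurable_skewProduct [MeasurableSMul₂ G X] :
    Measurable (skewProduct : (ℕ → G) × X → (ℕ → G) × X) := by
  unfold skewProduct; fun_prop

theorem measurePreserving_skewProduct [SFinite θ] [SFinite μ] [SFinite P]
    (hP : MeasurePreserving tailHead P (P.prod θ))
    (hμ : MeasurePreserving (fun q : G × X => q.1 • q.2) (θ.prod μ) μ) :
    MeasurePreserving skewProduct (P.prod μ) (P.prod μ) :=
  ((MeasurePreserving.id P).prod hμ).comp
    ((measurePreserving_prodAssoc P θ μ).comp (hP.prod (.id μ)))

-- The Markov property of `skewProduct`: the tail `σⁿ ω` is independent of the first `n` letters.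
theorem setLIntegral_comp_skewProduct_iterate [MeasurableSMul₂ G X] [SFinite θ]
    [IsProbabilityMeasure P]
    (hP : MeasurePreserving tailHead P (P.prod θ)) {f : (ℕ → G) × X → ℝ≥0∞}
    (hf : Measurable f) (n : ℕ) {a : ℕ → Set G} (ha : ∀ i, MeasurableSet (a i)) (x : X) :
    ∫⁻ ω in prefixCylinder n a, f (skewProduct^[n] (ω, x)) ∂P =
      ∫⁻ ω in prefixCylinder n a, ∫⁻ ω', f (ω', (skewProduct^[n] (ω, x)).2) ∂P ∂P := by
  induction n generalizing a x with
  | zero =>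
    simp [prefixCylinder]
  | succ n ih =>
    calc ∫⁻ ω in prefixCylinder (n + 1) a, f (skewProduct^[n + 1] (ω, x)) ∂P
        = ∫⁻ g in a 0, ∫⁻ ω in prefixCylinder n (fun i => a (i + 1)),
            f (skewProduct^[n] (ω, g • x)) ∂P ∂θ :=
          setLIntegral_prefixCylinder_succ hP ha
            (Φ := fun q => f (skewProduct^[n] (q.1, q.2 • x))) (by fun_prop)
      _ = ∫⁻ g in a 0, ∫⁻ ω in prefixCylinder n (fun i => a (i + 1)),
            ∫⁻ ω', f (ω', (skewProduct^[n] (ω, g • x)).2) ∂P ∂P ∂θ := by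
          simp_rw [ih (fun i => ha (i + 1))]
      _ = ∫⁻ ω in prefixCylinder (n + 1) a,
            ∫⁻ ω', f (ω', (skewProduct^[n + 1] (ω, x)).2) ∂P ∂P :=
          (setLIntegral_prefixCylinder_succ hP ha
            (Φ := fun q => ∫⁻ ω', f (ω', (skewProduct^[n] (q.1, q.2 • x)).2) ∂P)
            (by fun_prop)).symm

theorem lintegral_measure_slice_smul [MeasurableSMul₂ G X] [SFinite θ] [SFinite P]
    (hP : MeasurePreserving tailHead P (P.prod θ)) {s : Set ((ℕ → G) × X)}
    (hs : MeasurableSet s) (hinv : skewProduct ⁻¹' s = s) (x : X) :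
    ∫⁻ g, P {ω | (ω, g • x) ∈ s} ∂θ = P {ω | (ω, x) ∈ s} := by
  have hmeas : MeasurableSet {q : (ℕ → G) × G | (q.1, q.2 • x) ∈ s} :=
    hs.preimage (by fun_prop)
  have hslice : {ω | (ω, x) ∈ s} = tailHead ⁻¹' {q : (ℕ → G) × G | (q.1, q.2 • x) ∈ s} := by
    conv_lhs => rw [← hinv]
    rfl
  rw [hslice, hP.measure_preimage hmeas.nullMeasurableSet, Measure.prod_apply_symm hmeas]
  rfl

theorem restrict_eq_smul_of_ae_measure_slice_eq [MeasurableSMul₂ G X] [IsProbabilityMeasure θ]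
    [IsProbabilityMeasure P] [IsFiniteMeasure μ] (hP : MeasurePreserving tailHead P (P.prod θ))
    (hμ : MeasurePreserving (fun q : G × X => q.1 • q.2) (θ.prod μ) μ)
    {s : Set ((ℕ → G) × X)} (hs : MeasurableSet s) (hinv : skewProduct ⁻¹' s = s) {c : ℝ≥0∞}
    (hc : ∀ᵐ x ∂μ, P {ω | (ω, x) ∈ s} = c) :
    (P.prod μ).restrict s = c • P.prod μ := by
  have hind : Measurable (s.indicator (1 : (ℕ → G) × X → ℝ≥0∞)) := measurable_one.indicator hs
  have hslice : ∀ y, ∫⁻ ω, s.indicator 1 (ω, y) ∂P = P {ω | (ω, y) ∈ s} := fun y =>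
    lintegral_indicator_one (measurable_prodMk_right hs)
  have hfix : ∀ n p,
      s.indicator (1 : (ℕ → G) × X → ℝ≥0∞) (skewProduct^[n] p) = s.indicator 1 p := by
    intro n p
    conv_rhs => rw [← Function.iterate_fixed (f := Set.preimage skewProduct) hinv n,
      ← Set.preimage_iterate_eq]
    rfl
  have hcomp : ∀ n, ∀ᵐ p ∂(P.prod μ), P {ω | (ω, (skewProduct^[n] p).2) ∈ s} = c := fun n =>
    (measurePreserving_snd.comp
      ((measurePreserving_skewProduct hP hμ).iterate n)).quasiMeasurePreserving.ae hc
  refine Measure.ext_prod_prefixCylinder fun n a ha v hv => ?_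
  have hcyl := measurableSet_prefixCylinder n ha
  calc (P.prod μ).restrict s (prefixCylinder n a ×ˢ v)
      = ∫⁻ p in prefixCylinder n a ×ˢ v, s.indicator 1 p ∂(P.prod μ) := by
        rw [lintegral_indicator_one hs, Measure.restrict_apply hs,
          Measure.restrict_apply (hcyl.prod hv), inter_comm]
    _ = ∫⁻ x in v, ∫⁻ ω in prefixCylinder n a, s.indicator 1 (skewProduct^[n] (ω, x)) ∂P ∂μ := by
        simp_rw [hfix]
        rw [← Measure.prod_restrict, lintegral_prod_symm _ hind.aemeasurable]
    _ = ∫⁻ x in v, ∫⁻ ω in prefixCylinder n a,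
          P {ω' | (ω', (skewProduct^[n] (ω, x)).2) ∈ s} ∂P ∂μ := by
        simp_rw [setLIntegral_comp_skewProduct_iterate hP hind n ha, hslice]
    _ = ∫⁻ p in prefixCylinder n a ×ˢ v, P {ω | (ω, (skewProduct^[n] p).2) ∈ s} ∂(P.prod μ) := by
        rw [← Measure.prod_restrict, lintegral_prod_symm]
        exact ((measurable_measure_prodMk_right hs).comp (by fun_prop)).aemeasurable
    _ = (c • P.prod μ) (prefixCylinder n a ×ˢ v) := by
        rw [lintegral_congr_ae (ae_restrict_of_ae (hcomp n)), setLIntegral_const,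
          Measure.smul_apply, smul_eq_mul]

end SkewProduct

section StationaryMeasure

variable {G X : Type*} [SMul G X] [MeasurableSpace G] [MeasurableSpace X]
  {θ : Measure G} {μ : Measure X}

theorem measurePreserving_smul_of_lintegral_map_eq [MeasurableSMul₂ G X] [SFinite μ]
    (hstat : ∀ s : Set X, MeasurableSet s → ∫⁻ g, μ.map (g • · : X → X) s ∂θ = μ s) :
    MeasurePreserving (fun q : G × X => q.1 • q.2) (θ.prod μ) μ := by
  have hsmul : Measurable fun q : G × X => q.1 • q.2 := measurable_smul
  refine ⟨hsmul, Measure.ext fun s hs => ?_⟩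
  rw [Measure.map_apply hsmul hs, Measure.prod_apply (hsmul hs), ← hstat s hs]
  simp_rw [Measure.map_apply (measurable_const_smul _) hs]
  rfl

theorem ae_smul_eq_of_integral_smul_eq [IsProbabilityMeasure θ] [SFinite μ]
    (hμ : MeasurePreserving (fun q : G × X => q.1 • q.2) (θ.prod μ) μ) {f : X → ℝ}
    (hf : MemLp f 2 μ) (hharm : ∀ x, ∫ g, f (g • x) ∂θ = f x) :
    ∀ᵐ q ∂(θ.prod μ), f (q.1 • q.2) = f q.2 := by
  set φ : G × X → ℝ := fun q => f (q.1 • q.2)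
  set ψ : G × X → ℝ := fun q => f q.2
  have hφ : MemLp φ 2 (θ.prod μ) := hf.comp_measurePreserving hμ
  have hψ : MemLp ψ 2 (θ.prod μ) := hf.comp_measurePreserving measurePreserving_snd
  have hφφ : Integrable (fun q => φ q * φ q) (θ.prod μ) := hφ.integrable_mul hφ
  have hψφ : Integrable (fun q => ψ q * φ q) (θ.prod μ) := hψ.integrable_mul hφ
  have hψψ : Integrable (fun q => ψ q * ψ q) (θ.prod μ) := hψ.integrable_mul hψ
  have hff : AEStronglyMeasurable (fun x => f x * f x) μ := (hf.integrable_mul hf).1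
  have hIφφ : ∫ q, φ q * φ q ∂(θ.prod μ) = ∫ x, f x * f x ∂μ :=
    hμ.integral_comp_of_aestronglyMeasurable hff
  have hIψψ : ∫ q, ψ q * ψ q ∂(θ.prod μ) = ∫ x, f x * f x ∂μ :=
    measurePreserving_snd.integral_comp_of_aestronglyMeasurable hff
  have hIψφ : ∫ q, ψ q * φ q ∂(θ.prod μ) = ∫ x, f x * f x ∂μ := by
    rw [integral_prod_symm _ hψφ]
    simp_rw [ψ, φ, integral_const_mul, hharm]
  have hsq : ∫ q, (φ q - ψ q) ^ 2 ∂(θ.prod μ) = 0 := by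
    have hexp : (fun q => (φ q - ψ q) ^ 2) =
        fun q => φ q * φ q - 2 * (ψ q * φ q) + ψ q * ψ q := by
      funext q; ring
    rw [hexp, integral_add (f := fun q => φ q * φ q - 2 * (ψ q * φ q))
      (hφφ.sub (hψφ.const_mul 2)) hψψ, integral_sub hφφ (hψφ.const_mul 2), integral_const_mul,
      hIφφ, hIψφ, hIψψ]
    ring
  filter_upwards [(integral_eq_zero_iff_of_nonneg (fun q => sq_nonneg (φ q - ψ q))
    (hφ.sub hψ).integrable_sq).1 hsq] with q hq
  simpa [sub_eq_zero] using hq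

end StationaryMeasure

section GroupAction

variable {G X : Type*} [Group G] [MulAction G X] [MeasurableSpace X] {μ : Measure X}

-- Mathlib's `ErgodicSMul` presupposes an invariant measure, which a stationary `μ` need not be.
def IsErgodicAction (G : Type*) [Group G] [MulAction G X] (μ : Measure X) : Prop :=
  ∀ A : Set X, MeasurableSet A →
    (∀ g : G, μ (symmDiff ((g • · : X → X) ⁻¹' A) A) = 0) → μ A = 0 ∨ μ A = 1

theorem IsErgodicAction.exists_ae_eq_const [IsProbabilityMeasure μ] {β : Type*}
    [MeasurableSpace β] [Nonempty β] [HasCountableSeparatingOn β MeasurableSet univ]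
    (hergo : IsErgodicAction G μ) {f : X → β} (hf : Measurable f)
    (hinv : ∀ g : G, (fun x => f (g • x)) =ᵐ[μ] f) :
    ∃ c, f =ᵐ[μ] fun _ => c := by
  refine Filter.exists_eventuallyEq_const_of_eventually_mem_of_forall_separating MeasurableSet
    (s := univ) (by simp) fun U hU => ?_
  have hA : MeasurableSet (f ⁻¹' U) := hf hU
  rcases hergo _ hA fun g => measure_symmDiff_eq_zero_iff.2 ((hinv g).preimage U) with h | h
  · exact .inr (measure_eq_zero_iff_ae_notMem.1 h)
  · exact .inl (mem_ae_iff.2 ((prob_compl_eq_zero_iff hA).2 h))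

def aeStabilizer {β : Type*} (μ : Measure X)
    (hμ : ∀ g : G, Measure.QuasiMeasurePreserving (g • · : X → X) μ μ) (f : X → β) :
    Subgroup G where
  carrier := {g | (fun x => f (g • x)) =ᵐ[μ] f}
  one_mem' := by simp
  mul_mem' {g h} hg hh := by
    show (fun x => f ((g * h) • x)) =ᵐ[μ] f
    filter_upwards [(hμ h).ae_eq hg, hh] with x hgx hhx
    simp_all [mul_smul]
  inv_mem' {g} hg := by
    show (fun x => f (g⁻¹ • x)) =ᵐ[μ] f
    filter_upwards [(hμ g⁻¹).ae_eq hg] with x hx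
    simp_all

variable [MeasurableSpace G]

lemma measurableSet_aeStabilizer [MeasurableSMul₂ G X] [SFinite μ] {β : Type*}
    [MeasurableSpace β] [MeasurableEq β]
    (hμ : ∀ g : G, Measure.QuasiMeasurePreserving (g • · : X → X) μ μ) {f : X → β}
    (hf : Measurable f) :
    MeasurableSet (aeStabilizer μ hμ f : Set G) := by
  have hN : MeasurableSet {q : G × X | f (q.1 • q.2) ≠ f q.2} :=
    (measurableSet_eq_fun (by fun_prop) (by fun_prop)).compl
  have hS : (aeStabilizer μ hμ f : Set G) =
      (fun g => μ (Prod.mk g ⁻¹' {q : G × X | f (q.1 • q.2) ≠ f q.2})) ⁻¹' {0} := by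
    ext g; exact ae_iff
  rw [hS]
  exact measurable_measure_prodMk_left hN (measurableSet_singleton 0)

theorem IsAdmissible.eq_top_of_ae_mem [TopologicalSpace G] [IsTopologicalGroup G]
    [LocallyCompactSpace G] [BorelSpace G] {mG θ : Measure G} [mG.IsHaarMeasure]
    [mG.InnerRegular] [NeZero θ] (hadm : IsAdmissible mG θ) {H : Subgroup G}
    (hH : MeasurableSet (H : Set G)) (hθ : ∀ᵐ g ∂θ, g ∈ H) :
    H = ⊤ := by
  have hpos : 0 < mG H := by
    refine pos_iff_ne_zero.2 fun h0 => NeZero.ne θ ?_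
    rw [← Measure.measure_univ_eq_zero, ← union_compl_self (H : Set G)]
    exact measure_union_null (hadm.1 h0) (ae_iff.1 hθ)
  -- Steinhaus: `H / H ⊆ H` is a neighbourhood of `1`
  have hopen : IsOpen (H : Set G) := H.isOpen_of_mem_nhds <|
    Filter.mem_of_superset (Measure.div_mem_nhds_one_of_haar_pos mG _ hH hpos) <| by
      rintro _ ⟨a, ha, b, hb, rfl⟩
      exact H.div_mem ha hb
  exact Subgroup.coe_eq_univ.1 <|
    hadm.2 _ (H.isClosed_of_isOpen hopen) (fun a ha b hb => H.mul_mem ha hb) (ae_iff.1 hθ)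

theorem IsAdmissible.comp_smul_ae_eq_of_integral_smul_eq [TopologicalSpace G]
    [IsTopologicalGroup G] [LocallyCompactSpace G] [BorelSpace G] [MeasurableSMul₂ G X]
    {mG θ : Measure G} [mG.IsHaarMeasure] [mG.InnerRegular] [IsProbabilityMeasure θ] [SFinite μ]
    (hadm : IsAdmissible mG θ) (hμ : MeasurePreserving (fun q : G × X => q.1 • q.2) (θ.prod μ) μ)
    (hqi : ∀ g : G, Measure.QuasiMeasurePreserving (g • · : X → X) μ μ) {f : X → ℝ}
    (hf : MemLp f 2 μ) (hfm : Measurable f) (hharm : ∀ x, ∫ g, f (g • x) ∂θ = f x) (g : G) :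
    (fun x => f (g • x)) =ᵐ[μ] f := by
  have htop : aeStabilizer μ hqi f = ⊤ :=
    hadm.eq_top_of_ae_mem (measurableSet_aeStabilizer hqi hfm)
      (Measure.ae_ae_of_ae_prod (ae_smul_eq_of_integral_smul_eq hμ hf hharm))
  exact (htop ▸ Subgroup.mem_top g : g ∈ aeStabilizer μ hqi f)

end GroupAction

section Ergodicity

variable {G X : Type*} [Group G] [MulAction G X] [MeasurableSpace G] [MeasurableSpace X]
  [MeasurableSMul₂ G X] {μ : Measure X} {P : Measure (ℕ → G)}

theorem ergodic_skewProduct_of_isErgodicAction [TopologicalSpace G] [IsTopologicalGroup G]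
    [LocallyCompactSpace G] [BorelSpace G] {mG θ : Measure G} [mG.IsHaarMeasure]
    [mG.InnerRegular] [IsProbabilityMeasure θ] [IsProbabilityMeasure μ] [IsProbabilityMeasure P]
    (hadm : IsAdmissible mG θ) (hμ : MeasurePreserving (fun q : G × X => q.1 • q.2) (θ.prod μ) μ)
    (hqi : ∀ g : G, Measure.QuasiMeasurePreserving (g • · : X → X) μ μ)
    (hP : MeasurePreserving tailHead P (P.prod θ)) (hergo : IsErgodicAction G μ) :
    Ergodic skewProduct (P.prod μ) := by
  refine ⟨measurePreserving_skewProduct hP hμ, ⟨fun s hs hinv => ?_⟩⟩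
  set F : X → ℝ≥0∞ := fun x => P {ω | (ω, x) ∈ s}
  have hF : Measurable F := measurable_measure_prodMk_right hs
  have hFR : MemLp (fun x => (F x).toReal) 2 μ :=
    MemLp.of_bound hF.ennreal_toReal.aestronglyMeasurable 1 <| ae_of_all _ fun x => by
      simpa using ENNReal.toReal_le_of_le_ofReal zero_le_one (by simpa using prob_le_one)
  have hharm : ∀ x, ∫ g, (F (g • x)).toReal ∂θ = (F x).toReal := fun x => by
    have hFx : Measurable fun g : G => F (g • x) := hF.comp (by fun_prop)
    rw [integral_toReal hFx.aemeasurable (ae_of_all _ fun g => measure_lt_top P _),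
      lintegral_measure_slice_smul hP hs hinv x]
  obtain ⟨c, hc⟩ := hergo.exists_ae_eq_const hF.ennreal_toReal
    (hadm.comp_smul_ae_eq_of_integral_smul_eq hμ hqi hFR hF.ennreal_toReal hharm)
  have hcF : ∀ᵐ x ∂μ, F x = ENNReal.ofReal c := by
    filter_upwards [hc] with x hx
    rw [← hx, ofReal_toReal (measure_ne_top P _)]
  exact eventuallyConst_ae_of_restrict_eq_smul hs
    (restrict_eq_smul_of_ae_measure_slice_eq hP hμ hs hinv hcF)

theorem isErgodicAction_of_ergodic_skewProduct [IsProbabilityMeasure μ] [IsProbabilityMeasure P]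
    (h : Ergodic skewProduct (P.prod μ)) :
    IsErgodicAction G μ := by
  intro A hA hinv
  have hB : MeasurableSet (univ ×ˢ A : Set ((ℕ → G) × X)) := MeasurableSet.univ.prod hA
  have hpre : skewProduct ⁻¹' (univ ×ˢ A) =ᵐ[P.prod μ] univ ×ˢ A := by
    rw [← measure_symmDiff_eq_zero_iff,
      Measure.prod_apply ((measurable_skewProduct hB).symmDiff hB)]
    convert lintegral_zero with ω
    convert hinv (ω 0) using 2
    rw [preimage_symmDiff, mk_preimage_prod_right (mem_univ ω)]
    congr 1
    ext x
    simp [skewProduct]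
  have hmeas : (P.prod μ) (univ ×ˢ A) = μ A := by
    rw [Measure.prod_prod, measure_univ, one_mul]
  rcases h.quasiErgodic.ae_empty_or_univ₀ hB.nullMeasurableSet hpre with h0 | h1
  · exact .inl (hmeas ▸ ae_eq_empty.1 h0)
  · exact .inr (by rw [← hmeas, measure_congr h1, measure_univ])

end Ergodicity

theorem stmt_11_general {G X : Type*} [Group G] [TopologicalSpace G] [IsTopologicalGroup G]
    [LocallyCompactSpace G] [SecondCountableTopology G]
    [MeasurableSpace G] [BorelSpace G] [MeasurableSpace X]
    (mG : Measure G) [mG.IsHaarMeasure]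
    (θ : Measure G) [IsProbabilityMeasure θ] (hadm : IsAdmissible mG θ)
    [MulAction G X] (hact : Measurable fun p : G × X => p.1 • p.2)
    (μ : Measure X) [IsProbabilityMeasure μ]
    (hstat : ∀ s : Set X, MeasurableSet s → ∫⁻ g, μ.map (g • · : X → X) s ∂θ = μ s)
    (hqi : ∀ g : G, μ.map (g • · : X → X) ≪ μ ∧ μ ≪ μ.map (g • · : X → X))
    (P : Measure (ℕ → G)) [IsProbabilityMeasure P]
    (hiid : ∀ (n : ℕ) (s : ℕ → Set G), (∀ i, MeasurableSet (s i)) →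
      P {ω | ∀ i < n, ω i ∈ s i} = ∏ i ∈ Finset.range n, θ (s i)) :
    (∀ A : Set X, MeasurableSet A →
        (∀ g : G, μ (symmDiff ((g • · : X → X) ⁻¹' A) A) = 0) → μ A = 0 ∨ μ A = 1) ↔
      Ergodic (fun p : (ℕ → G) × X => (fun n => p.1 (n + 1), p.1 0 • p.2)) (P.prod μ) := by
  have : MeasurableSMul₂ G X := ⟨hact⟩
  have hP := measurePreserving_tailHead hiid
  have hμ := measurePreserving_smul_of_lintegral_map_eq hstat
  have hqmp : ∀ g : G, Measure.QuasiMeasurePreserving (g • · : X → X) μ μ :=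
    fun g => ⟨measurable_const_smul g, (hqi g).1⟩
  exact ⟨ergodic_skewProduct_of_isErgodicAction hadm hμ hqmp hP,
    isErgodicAction_of_ergodic_skewProduct⟩

/-- A stationary `(G,θ)`-space `(X,μ)` is ergodic as a `G`-space if and only if the
forward skew-product transformation `τ(ω,x) = (σω, ω_0.x)` on `(G^ℕ × X, θ^{⊗ℕ} ⊗ μ)`
is ergodic. -/
theorem stmt_11 {G X : Type*} [Group G] [TopologicalSpace G] [IsTopologicalGroup G]
    [LocallyCompactSpace G] [SecondCountableTopology G]
    [MeasurableSpace G] [BorelSpace G] [MeasurableSpace X] [StandardBorelSpace X]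
    (mG : Measure G) [mG.IsHaarMeasure]
    (θ : Measure G) [IsProbabilityMeasure θ] (hadm : IsAdmissible mG θ)
    [MulAction G X] (hact : Measurable fun p : G × X => p.1 • p.2)
    (μ : Measure X) [IsProbabilityMeasure μ]
    (hstat : ∀ s : Set X, MeasurableSet s → ∫⁻ g, μ.map (g • · : X → X) s ∂θ = μ s)
    (hqi : ∀ g : G, μ.map (g • · : X → X) ≪ μ ∧ μ ≪ μ.map (g • · : X → X))
    (P : Measure (ℕ → G)) [IsProbabilityMeasure P]
    (hiid : ∀ (n : ℕ) (s : ℕ → Set G), (∀ i, MeasurableSet (s i)) →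
      P {ω | ∀ i < n, ω i ∈ s i} = ∏ i ∈ Finset.range n, θ (s i)) :
    (∀ A : Set X, MeasurableSet A →
        (∀ g : G, μ (symmDiff ((g • · : X → X) ⁻¹' A) A) = 0) → μ A = 0 ∨ μ A = 1) ↔
      Ergodic (fun p : (ℕ → G) × X => (fun n => p.1 (n + 1), p.1 0 • p.2)) (P.prod μ) :=
  stmt_11_general mG θ hadm hact μ hstat hqi P hiid
end

section
/- Let (G,θ) be a measured group with 𝔼_θ[𝔪_θ] < ∞ and suppose 𝔪_θ is locally bounded. Then the family ℍ(G,θ) of positive θ-harmonic functions u with u(e)=1 is uniformly bounded and equicontinuous on every compact subset of G: for every compact C ⊆ G, sup{u(g) : u ∈ ℍ(G,θ), g ∈ C} ≤ sup_{g∈C} 𝔪_θ(g) < ∞, and |u(h) − u(hk)| ≤ M·‖𝔪_θ·(φ − kφ)‖_{L¹(G)} for all u ∈ ℍ(G,θ), h ∈ C, k ∈ G, where M = sup_{g∈C} 𝔪_θ(g), φ = dθ/dm_G and kφ(x) = φ(k⁻¹x). -/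
open MeasureTheory ENNReal

/-!
If `u ∈ ℍ(G,θ)` then `u(h ⬝)/u(h) ∈ ℍ(G,θ)`, whence `u(hg) ≤ 𝔪_θ(h) 𝔪_θ(g)`; in particular
`u ≤ sup_C 𝔪_θ` on `C`. Writing harmonicity against Haar measure, `u(w) = ∫ u(wg) φ(g) dm_G(g)`,
left invariance of `m_G` gives `u(h) − u(hk) = ∫ u(hg) (φ(g) − φ(k⁻¹g)) dm_G(g)`, and bounding
`u(hg)` by `𝔪_θ(h) 𝔪_θ(g)` under the integral yields the equicontinuity estimate.
-/

section HarmonicCone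

variable {G : Type*} [Group G] [MeasurableSpace G] {θ : Measure G} {u : G → ℝ}

lemma ofReal_le_majorant (hu : u ∈ harmCone θ) (g : G) :
    ENNReal.ofReal (u g) ≤ majorant θ g :=
  le_iSup₂ (f := fun v (_ : v ∈ harmCone θ) => ENNReal.ofReal (v g)) u hu

lemma le_of_majorant_le (hu : u ∈ harmCone θ) {g : G} {M : ℝ}
    (hM : majorant θ g ≤ ENNReal.ofReal M) : u g ≤ M :=
  ((ENNReal.ofReal_le_ofReal_iff' ..).mp ((ofReal_le_majorant hu g).trans hM)).resolve_right
    (hu.2.1 g).not_ge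

lemma div_apply_mul_left_mem_harmCone [MeasurableMul G] (hu : u ∈ harmCone θ) (h : G) :
    (fun x => u (h * x) / u h) ∈ harmCone θ := by
  obtain ⟨hmeas, hpos, hharm, -⟩ := hu
  refine ⟨(hmeas.comp (measurable_const_mul h)).div_const _,
    fun g => div_pos (hpos _) (hpos h), fun g => ?_, by simp [div_self (hpos h).ne']⟩
  simp only [← mul_assoc]
  rw [integral_div, hharm (h * g)]

lemma ofReal_apply_mul_le_majorant_mul [MeasurableMul G] (hu : u ∈ harmCone θ) (h g : G) :
    ENNReal.ofReal (u (h * g)) ≤ majorant θ h * majorant θ g := by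
  have hpos := hu.2.1 h
  calc ENNReal.ofReal (u (h * g))
      = ENNReal.ofReal (u h) * ENNReal.ofReal (u (h * g) / u h) := by
        rw [← ENNReal.ofReal_mul hpos.le, mul_div_cancel₀ _ hpos.ne']
    _ ≤ majorant θ h * majorant θ g :=
        mul_le_mul' (ofReal_le_majorant hu h)
          (ofReal_le_majorant (div_apply_mul_left_mem_harmCone hu h) g)

end HarmonicCone

lemma integral_withDensity_ofReal {α : Type*} [MeasurableSpace α] {μ : Measure α} {φ : α → ℝ}
    (hφ_meas : Measurable φ) (hφ_nonneg : ∀ x, 0 ≤ φ x) (f : α → ℝ) :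
    ∫ x, f x ∂μ.withDensity (fun x => ENNReal.ofReal (φ x)) = ∫ x, f x * φ x ∂μ := by
  rw [integral_withDensity_eq_integral_toReal_smul (by fun_prop)
    (.of_forall fun _ => ENNReal.ofReal_lt_top)]
  simp only [ENNReal.toReal_ofReal (hφ_nonneg _), smul_eq_mul, mul_comm]

section Density

variable {G : Type*} [Group G] [MeasurableSpace G] {mG : Measure G} {φ u : G → ℝ}

lemma IsHarmonic.integral_mul_density (hφ_meas : Measurable φ) (hφ_nonneg : ∀ g, 0 ≤ φ g)
    (hu : IsHarmonic (mG.withDensity fun g => ENNReal.ofReal (φ g)) u) (w : G) :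
    ∫ g, u (w * g) * φ g ∂mG = u w := by
  rw [← integral_withDensity_ofReal hφ_meas hφ_nonneg, hu]

variable [MeasurableMul G] [mG.IsMulLeftInvariant]

lemma integral_mul_translate_density (hrep : ∀ w, ∫ g, u (w * g) * φ g ∂mG = u w) (h k : G) :
    ∫ g, u (h * g) * φ (k⁻¹ * g) ∂mG = u (h * k) := by
  rw [← integral_mul_left_eq_self _ k, ← hrep]
  simp only [mul_assoc, inv_mul_cancel_left]

lemma sub_eq_integral_mul_sub_translate_density
    (hrep : ∀ w, ∫ g, u (w * g) * φ g ∂mG = u w) {h k : G} (hh : u h ≠ 0)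
    (hhk : u (h * k) ≠ 0) :
    u h - u (h * k) = ∫ g, u (h * g) * (φ g - φ (k⁻¹ * g)) ∂mG := by
  have htrans := integral_mul_translate_density hrep h
  have hid := htrans 1
  simp only [inv_one, one_mul, mul_one] at hid
  simp only [mul_sub]
  -- both integrals are nonzero, so the integrands are integrable (else they would be junk `0`)
  rw [integral_sub (.of_integral_ne_zero (hid ▸ hh)) (.of_integral_ne_zero (htrans k ▸ hhk)),
    hid, htrans k]

lemma ofReal_abs_sub_le_lintegral (hrep : ∀ w, ∫ g, u (w * g) * φ g ∂mG = u w)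
    (hpos : ∀ g, 0 < u g) (h k : G) :
    ENNReal.ofReal |u h - u (h * k)| ≤
      ∫⁻ g, ENNReal.ofReal (u (h * g)) * ENNReal.ofReal |φ g - φ (k⁻¹ * g)| ∂mG := by
  rw [sub_eq_integral_mul_sub_translate_density hrep (hpos h).ne' (hpos _).ne',
    ← Real.enorm_eq_ofReal_abs]
  refine (enorm_integral_le_lintegral_enorm _).trans_eq (lintegral_congr fun g => ?_)
  rw [enorm_mul, Real.enorm_eq_ofReal_abs, Real.enorm_eq_ofReal_abs, abs_of_pos (hpos _)]

end Density

theorem stmt_18_general {G : Type*} [Group G] [TopologicalSpace G] [IsTopologicalGroup G]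
    [MeasurableSpace G] [BorelSpace G]
    (mG : Measure G) [mG.IsHaarMeasure]
    (φ : G → ℝ) (hφ_meas : Measurable φ) (hφ_nonneg : ∀ g, 0 ≤ φ g)
    (θ : Measure G)
    (hθ : θ = mG.withDensity fun g => ENNReal.ofReal (φ g))
    (hloc : ∀ L : Set G, IsCompact L → ∃ M : ℝ, ∀ g ∈ L, majorant θ g ≤ ENNReal.ofReal M)
    (C : Set G) (hC : IsCompact C) :
    ∃ M : ℝ, (∀ g ∈ C, majorant θ g ≤ ENNReal.ofReal M) ∧
      (∀ u ∈ harmCone θ, ∀ g ∈ C, u g ≤ M) ∧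
      ∀ u ∈ harmCone θ, ∀ h ∈ C, ∀ k : G,
        ENNReal.ofReal |u h - u (h * k)| ≤
          ENNReal.ofReal M *
            ∫⁻ g, majorant θ g * ENNReal.ofReal |φ g - φ (k⁻¹ * g)| ∂mG := by
  obtain ⟨M, hM⟩ := hloc C hC
  refine ⟨M, hM, fun u hu g hg => le_of_majorant_le hu (hM g hg), fun u hu h hh k => ?_⟩
  have hrep := (hθ ▸ hu.2.2.1 : IsHarmonic _ u).integral_mul_density hφ_meas hφ_nonneg
  calc ENNReal.ofReal |u h - u (h * k)|
      ≤ ∫⁻ g, ENNReal.ofReal (u (h * g)) * ENNReal.ofReal |φ g - φ (k⁻¹ * g)| ∂mG :=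
        ofReal_abs_sub_le_lintegral hrep hu.2.1 h k
    _ ≤ ∫⁻ g, ENNReal.ofReal M * (majorant θ g * ENNReal.ofReal |φ g - φ (k⁻¹ * g)|) ∂mG :=
        lintegral_mono fun g => by
          rw [← mul_assoc]
          exact mul_le_mul_left
            ((ofReal_apply_mul_le_majorant_mul hu h g).trans (mul_le_mul_left (hM h hh) _)) _
    _ = _ := lintegral_const_mul' _ _ ENNReal.ofReal_ne_top

/-- Under `𝔼_θ[𝔪_θ] < ∞` and local boundedness of `𝔪_θ`, the family `ℍ(G,θ)` is
uniformly bounded and equicontinuous on every compact `C ⊆ G`: every `u ∈ ℍ(G,θ)` is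
bounded on `C` by `M = sup_C 𝔪_θ < ∞`, and
`|u(h) − u(hk)| ≤ M·‖𝔪_θ·(φ − kφ)‖_{L¹}` for `h ∈ C`, `k ∈ G`. -/
theorem stmt_18 {G : Type*} [Group G] [TopologicalSpace G] [IsTopologicalGroup G]
    [LocallyCompactSpace G] [SecondCountableTopology G]
    [MeasurableSpace G] [BorelSpace G]
    (mG : Measure G) [mG.IsHaarMeasure]
    (φ : G → ℝ) (hφ_meas : Measurable φ) (hφ_nonneg : ∀ g, 0 ≤ φ g)
    (θ : Measure G) [IsProbabilityMeasure θ]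
    (hθ : θ = mG.withDensity fun g => ENNReal.ofReal (φ g))
    (hadm : IsAdmissible mG θ)
    (hint : ∫⁻ g, majorant θ g ∂θ < ⊤)
    (hloc : ∀ L : Set G, IsCompact L → ∃ M : ℝ, ∀ g ∈ L, majorant θ g ≤ ENNReal.ofReal M)
    (C : Set G) (hC : IsCompact C) :
    ∃ M : ℝ, (∀ g ∈ C, majorant θ g ≤ ENNReal.ofReal M) ∧
      (∀ u ∈ harmCone θ, ∀ g ∈ C, u g ≤ M) ∧
      ∀ u ∈ harmCone θ, ∀ h ∈ C, ∀ k : G,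
        ENNReal.ofReal |u h - u (h * k)| ≤
          ENNReal.ofReal M *
            ∫⁻ g, majorant θ g * ENNReal.ofReal |φ g - φ (k⁻¹ * g)| ∂mG :=
  stmt_18_general mG φ hφ_meas hφ_nonneg θ hθ hloc C hC
end
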